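/- arXiv:2501.13202 — 3 statements merged into one kernel-verified Lean document; each statement's English description precedes it below -/
import Mathlib

section
/- Let (X,d) be a distance space. For all f,g ∈ T_d, d∞(f,g) = sup{d(x,y) − f(x) − g(y) : x,y ∈ X}, where both sides are taken as values in [0,+∞] and the equality holds also when both sides are +∞. -/
open scoped ENNReal

section CoreDefs

variable {Y : Type*}

/-- A distance space: symmetric, nonnegative, vanishing on the diagonal. -/
def IsDistance (d : Y → Y → ℝ) : Prop :=
  (∀ x y, 0 ≤ d x y) ∧ (∀ x y, d x y = d y x) ∧ ∀ x, d x x = 0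

/-- The set `P_d` of functions dominating the distance `d`. -/
def Pd (d : Y → Y → ℝ) : Set (Y → ℝ) :=
  {f | ∀ x y, d x y ≤ f x + f y}

/-- The tight span `T_d`: pointwise-minimal elements of `P_d`. -/
def Td (d : Y → Y → ℝ) : Set (Y → ℝ) :=
  {f | f ∈ Pd d ∧ ∀ g ∈ Pd d, g ≤ f → g = f}

/-- The sup-distance `d∞(f,g) = sup_x |f x - g x|`, valued in `[0,∞]`. -/
noncomputable def dInfty (f g : Y → ℝ) : ℝ≥0∞ :=
  ⨆ y, edist (f y) (g y)

/-- `κ(x) = {f ∈ T_d : f x = 0}`. -/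
def kappa (d : Y → Y → ℝ) (x : Y) : Set (Y → ℝ) :=
  {f | f ∈ Td d ∧ f x = 0}

/-- A pseudometric: symmetric, nonnegative, vanishing on the diagonal,
satisfying the triangle inequality. -/
def IsPseudometric (ρ : Y → Y → ℝ) : Prop :=
  (∀ x y, 0 ≤ ρ x y) ∧ (∀ x y, ρ x y = ρ y x) ∧ (∀ x, ρ x x = 0) ∧
  ∀ x y z, ρ x z ≤ ρ x y + ρ y z

/-- `M(d)`: the set of pseudometrics dominating `d`. -/
def Md (d : Y → Y → ℝ) : Set (Y → Y → ℝ) :=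
  {ρ | IsPseudometric ρ ∧ ∀ x y, d x y ≤ ρ x y}

end CoreDefs

/-!
A function `f` of the tight span is tight at every point: if `f x + f y` exceeded `d x y` by
a fixed `ε > 0` for all `y`, lowering `f x` by `ε / 2` would stay in `P_d`, against
minimality. Hence `|f x - g x|` is approximated by `d y x - f y - g x` (tightness of `f` at `x`)
or by `d x y - f x - g y` (tightness of `g` at `x`), while conversely
`d x y - f x - g y ≤ f y - g y` because `f ∈ P_d`.
-/

lemma ENNReal.ofReal_le_iSup_ofReal_of_forall_pos {ι : Type*} {t : ℝ} {u : ι → ℝ}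
    (h : ∀ ε > 0, ∃ i, t ≤ u i + ε) : ENNReal.ofReal t ≤ ⨆ i, ENNReal.ofReal (u i) := by
  refine ENNReal.le_of_forall_pos_le_add fun ε hε _ => ?_
  obtain ⟨i, hi⟩ := h ε hε
  calc ENNReal.ofReal t ≤ ENNReal.ofReal (u i + ε) := ENNReal.ofReal_le_ofReal hi
    _ ≤ ENNReal.ofReal (u i) + ENNReal.ofReal ε := ENNReal.ofReal_add_le
    _ ≤ (⨆ i, ENNReal.ofReal (u i)) + ε :=
      add_le_add (le_iSup (fun i => ENNReal.ofReal (u i)) i) ENNReal.ofReal_coe_nnreal.le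

section TightSpan

variable {X : Type*} {d : X → X → ℝ}

lemma update_mem_Pd [DecidableEq X] (hsymm : ∀ x y, d x y = d y x) {f : X → ℝ}
    (hf : f ∈ Pd d) {x : X} {c : ℝ} (hxx : d x x ≤ c + c) (hxy : ∀ y ≠ x, d x y ≤ c + f y) :
    Function.update f x c ∈ Pd d := by
  intro a b
  by_cases ha : a = x <;> by_cases hb : b = x
  · subst ha hb; simpa using hxx
  · subst ha; simpa [hb] using hxy b hb
  · subst hb; simpa [ha, hsymm a, add_comm] using hxy a ha
  · simpa [ha, hb] using hf a b

lemma exists_add_le_of_mem_Td (hsymm : ∀ x y, d x y = d y x) {f : X → ℝ} (hf : f ∈ Td d)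
    (x : X) {ε : ℝ} (hε : 0 < ε) : ∃ y, f x + f y ≤ d x y + ε := by
  classical
  by_contra! h
  have hmem : Function.update f x (f x - ε / 2) ∈ Pd d :=
    update_mem_Pd hsymm hf.1 (by linarith [h x]) fun y _ => by linarith [h y]
  have hle : Function.update f x (f x - ε / 2) ≤ f :=
    update_le_iff.2 ⟨by linarith, fun _ _ => le_rfl⟩
  have hfx := congrFun (hf.2 _ hmem hle) x
  rw [Function.update_self] at hfx
  linarith

lemma iSup_ofReal_le_dInfty {f : X → ℝ} (hf : f ∈ Pd d) (g : X → ℝ) :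
    ⨆ x, ⨆ y, ENNReal.ofReal (d x y - f x - g y) ≤ dInfty f g :=
  iSup₂_le fun x y =>
    calc ENNReal.ofReal (d x y - f x - g y) ≤ ENNReal.ofReal |f y - g y| :=
          ENNReal.ofReal_le_ofReal (by linarith [hf x y, le_abs_self (f y - g y)])
      _ = edist (f y) (g y) := by rw [edist_dist, Real.dist_eq]
      _ ≤ dInfty f g := le_iSup (fun z => edist (f z) (g z)) y

lemma dInfty_le_iSup_ofReal (hsymm : ∀ x y, d x y = d y x) {f g : X → ℝ}
    (hf : f ∈ Td d) (hg : g ∈ Td d) :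
    dInfty f g ≤ ⨆ x, ⨆ y, ENNReal.ofReal (d x y - f x - g y) := by
  rw [← iSup_prod (f := fun p : X × X => ENNReal.ofReal (d p.1 p.2 - f p.1 - g p.2))]
  refine iSup_le fun x => ?_
  rw [edist_dist, Real.dist_eq, abs_eq_max_neg, ENNReal.ofReal_max, neg_sub]
  refine max_le (ENNReal.ofReal_le_iSup_ofReal_of_forall_pos fun ε hε => ?_)
    (ENNReal.ofReal_le_iSup_ofReal_of_forall_pos fun ε hε => ?_)
  · obtain ⟨y, hy⟩ := exists_add_le_of_mem_Td hsymm hf x hε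
    exact ⟨(y, x), by rw [hsymm y x]; linarith⟩
  · obtain ⟨y, hy⟩ := exists_add_le_of_mem_Td hsymm hg x hε
    exact ⟨(x, y), by dsimp only; linarith⟩

end TightSpan

theorem statement2_general {X : Type*} (d : X → X → ℝ)
    (hd : IsDistance d) (f g : X → ℝ) (hf : f ∈ Td d) (hg : g ∈ Td d) :
    dInfty f g = ⨆ x : X, ⨆ y : X, ENNReal.ofReal (d x y - f x - g y) :=
  le_antisymm (dInfty_le_iSup_ofReal hd.2.1 hf hg) (iSup_ofReal_le_dInfty hf.1 g)

/-- For `f, g ∈ T_d`, `d∞(f,g) = sup {d x y - f x - g y : x, y ∈ X}`,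
both sides being taken in `[0,∞]`. -/
theorem statement2 {X : Type*} [Nonempty X] (d : X → X → ℝ)
    (hd : IsDistance d) (f g : X → ℝ) (hf : f ∈ Td d) (hg : g ∈ Td d) :
    dInfty f g = ⨆ x : X, ⨆ y : X, ENNReal.ofReal (d x y - f x - g y) :=
  statement2_general d hd f g hf hg
end

section
/- Let (X,d) be a distance space such that (T_d,d∞) is a metric space (T_d is non-empty and d∞(f,g) < ∞ for all f,g ∈ T_d). Then (T_d,d∞) is hyperconvex. -/
open scoped ENNReal

/-!
The candidate centre is `g := ⨅ α, (y α + r α)`. The compatibility `d∞(y α, y β) ≤ r α + r β`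
makes `g` an element of `P_d`, and by Zorn some `z ∈ T_d` lies below it, so `z ≤ y α + r α`.
The reverse bound `y α ≤ z + r α` comes from minimality of `y α`: a minimal `f ∈ P_d`
cannot exceed at `x` any `b ≥ 0` with `d x w - f w ≤ b` for all `w`, since otherwise lowering
`f x` to `b` would stay in `P_d`.
-/

section TightSpan

variable {X : Type*} {d : X → X → ℝ}

lemma dInfty_le_ofReal_iff {f g : X → ℝ} {r : ℝ} (hr : 0 ≤ r) :
    dInfty f g ≤ ENNReal.ofReal r ↔ ∀ x, |f x - g x| ≤ r := by
  simp only [dInfty, iSup_le_iff, edist_dist, Real.dist_eq, ENNReal.ofReal_le_ofReal_iff hr]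

lemma nonneg_of_mem_Pd (hd : IsDistance d) {f : X → ℝ} (hf : f ∈ Pd d) (x : X) : 0 ≤ f x := by
  have := hf x x
  rw [hd.2.2 x] at this
  linarith

lemma exists_mem_Pd_mem_lowerBounds_of_isChain (hd : IsDistance d) {c : Set (X → ℝ)}
    (hcP : c ⊆ Pd d) (hc : IsChain (· ≤ ·) c) (hne : c.Nonempty) :
    ∃ lb ∈ Pd d, lb ∈ lowerBounds c := by
  have : Nonempty c := hne.to_subtype
  have hbdd : ∀ x, BddBelow (Set.range fun h : c ↦ (h : X → ℝ) x) := fun x ↦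
    ⟨0, by rintro _ ⟨h, rfl⟩; exact nonneg_of_mem_Pd hd (hcP h.2) x⟩
  refine ⟨fun x ↦ ⨅ h : c, (h : X → ℝ) x, fun u v ↦ ?_, fun h hh x ↦ ciInf_le (hbdd x) ⟨h, hh⟩⟩
  have hpair : ∀ h₁ h₂ : c, d u v ≤ (h₁ : X → ℝ) u + (h₂ : X → ℝ) v := by
    intro ⟨h₁, mem₁⟩ ⟨h₂, mem₂⟩
    rcases hc.total mem₁ mem₂ with hle | hle
    · linarith [hcP mem₁ u v, hle v]
    · linarith [hcP mem₂ u v, hle u]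
  have hu : ∀ h₂ : c, d u v - (h₂ : X → ℝ) v ≤ ⨅ h : c, (h : X → ℝ) u := fun h₂ ↦
    le_ciInf fun h₁ ↦ by linarith [hpair h₁ h₂]
  have hv : d u v - ⨅ h : c, (h : X → ℝ) u ≤ ⨅ h : c, (h : X → ℝ) v :=
    le_ciInf fun h₂ ↦ by linarith [hu h₂]
  linarith

lemma exists_mem_Td_le (hd : IsDistance d) {g : X → ℝ} (hg : g ∈ Pd d) : ∃ z ∈ Td d, z ≤ g := by
  obtain ⟨z, hzg, hzP, hzmin⟩ := zorn_le_nonempty₀ (α := (X → ℝ)ᵒᵈ) (Pd d)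
    (fun c hcP hc y hy ↦ exists_mem_Pd_mem_lowerBounds_of_isChain hd hcP hc.symm ⟨y, hy⟩) g hg
  exact ⟨z, ⟨hzP, fun w hwP hwz ↦ le_antisymm hwz (hzmin hwP hwz)⟩, hzg⟩

lemma apply_le_of_mem_Td (hd : IsDistance d) {f : X → ℝ} (hf : f ∈ Td d) (x : X) {b : ℝ}
    (hb₀ : 0 ≤ b) (hb : ∀ w, d x w - f w ≤ b) : f x ≤ b := by
  classical
  set g := Function.update f x (min (f x) b)
  have hgle : g ≤ f := update_le_iff.mpr ⟨min_le_left _ _, fun _ _ ↦ le_rfl⟩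
  have hside : ∀ w, d x w ≤ min (f x) b + g w := by
    intro w
    rcases eq_or_ne w x with rfl | hw
    · simp only [g, Function.update_self, hd.2.2 w]
      linarith [le_min (nonneg_of_mem_Pd hd hf.1 w) hb₀]
    · simp only [g, Function.update_of_ne hw]
      rcases min_choice (f x) b with h | h <;> rw [h] <;> linarith [hf.1 x w, hb w]
  have hgP : g ∈ Pd d := by
    intro u v
    rcases eq_or_ne u x with rfl | hu
    · simpa [g] using hside v
    rcases eq_or_ne v x with rfl | hv
    · simpa [g, hd.2.1 u v, add_comm] using hside u
    simpa [g, hu, hv] using hf.1 u v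
  have := congrFun (hf.2 g hgP hgle) x
  simp only [g, Function.update_self] at this
  exact min_eq_left_iff.mp this

lemma le_add_of_mem_Td_of_le_add (hd : IsDistance d) {f z : X → ℝ} (hf : f ∈ Td d)
    (hz : z ∈ Pd d) {c : ℝ} (hc : 0 ≤ c) (hzf : ∀ x, z x ≤ f x + c) (x : X) :
    f x ≤ z x + c :=
  apply_le_of_mem_Td hd hf x (by linarith [nonneg_of_mem_Pd hd hz x]) fun w ↦ by
    linarith [hz x w, hzf w]

lemma iInf_add_mem_Pd {ι : Type*} [Nonempty ι] {y : ι → X → ℝ}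
    (hy : ∀ α, y α ∈ Pd d) {r : ι → ℝ}
    (hyr : ∀ α β x, |y α x - y β x| ≤ r α + r β) :
    (fun x ↦ ⨅ α, (y α x + r α)) ∈ Pd d := by
  intro u v
  have hu : ∀ β, d u v - (y β v + r β) ≤ ⨅ α, (y α u + r α) := fun β ↦
    le_ciInf fun α ↦ by linarith [hy β u v, (abs_sub_le_iff.mp (hyr β α u)).1]
  have hv : d u v - ⨅ α, (y α u + r α) ≤ ⨅ α, (y α v + r α) :=
    le_ciInf fun β ↦ by linarith [hu β]
  linarith

end TightSpan

theorem statement6_general {X : Type*} (d : X → X → ℝ)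
    (hd : IsDistance d) (hne : (Td d).Nonempty) :
    ∀ (ι : Type*) (y : ι → X → ℝ), (∀ α, y α ∈ Td d) →
      ∀ r : ι → ℝ, (∀ α, 0 ≤ r α) →
      (∀ α β, dInfty (y α) (y β) ≤ ENNReal.ofReal (r α + r β)) →
      ∃ z ∈ Td d, ∀ α, dInfty (y α) z ≤ ENNReal.ofReal (r α) := by
  intro ι y hy r hr hyr
  rcases isEmpty_or_nonempty ι with hι | hι
  · obtain ⟨z, hz⟩ := hne
    exact ⟨z, hz, fun α ↦ isEmptyElim α⟩
  have hdist : ∀ α β x, |y α x - y β x| ≤ r α + r β := fun α β ↦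
    (dInfty_le_ofReal_iff (add_nonneg (hr α) (hr β))).mp (hyr α β)
  obtain ⟨z, hzT, hzg⟩ :=
    exists_mem_Td_le hd (iInf_add_mem_Pd (fun α ↦ (hy α).1) hdist)
  have hzy : ∀ α x, z x ≤ y α x + r α := fun α x ↦ (hzg x).trans <|
    ciInf_le ⟨0, by rintro _ ⟨β, rfl⟩; exact add_nonneg (nonneg_of_mem_Pd hd (hy β).1 x) (hr β)⟩ α
  refine ⟨z, hzT, fun α ↦ (dInfty_le_ofReal_iff (hr α)).mpr fun x ↦ abs_sub_le_iff.mpr ⟨?_, ?_⟩⟩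
  · linarith [le_add_of_mem_Td_of_le_add hd (hy α) hzT.1 (hr α) (hzy α) x]
  · linarith [hzy α x]

/-- If `(T_d, d∞)` is a metric space (nonempty with all distances finite),
then it is hyperconvex. -/
theorem statement6 {X : Type*} [Nonempty X] (d : X → X → ℝ)
    (hd : IsDistance d) (hne : (Td d).Nonempty)
    (hfin : ∀ f ∈ Td d, ∀ g ∈ Td d, dInfty f g ≠ ⊤) :
    ∀ (ι : Type*) (y : ι → X → ℝ), (∀ α, y α ∈ Td d) →
      ∀ r : ι → ℝ, (∀ α, 0 ≤ r α) →
      (∀ α β, dInfty (y α) (y β) ≤ ENNReal.ofReal (r α + r β)) →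
      ∃ z ∈ Td d, ∀ α, dInfty (y α) z ≤ ENNReal.ofReal (r α) :=
  statement6_general d hd hne
end

section
/- Let (X,δ) be a diversity and D = D_δ. The following are equivalent: (i) P_δ = P_δ^{(2)}; (ii) T_δ = T_δ^{(2)}; (iii) for all f : Pfin(X) → ℝ, f ∈ T_δ if and only if f − δ ∈ T_D. -/
open scoped ENNReal

section DivDefs

variable {X : Type*} [DecidableEq X]

/-- A diversity on `X`: a nonnegative function on finite subsets which
vanishes exactly on sets of at most one element and satisfies the diversity
triangle inequality. -/
def IsDiversity (δ : Finset X → ℝ) : Prop :=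
  (∀ A, 0 ≤ δ A) ∧ (∀ A : Finset X, δ A = 0 ↔ A.card ≤ 1) ∧
  ∀ A B C : Finset X, B.Nonempty → δ (A ∪ C) ≤ δ (A ∪ B) + δ (B ∪ C)

/-- The distance `D_δ` on finite subsets associated to a diversity `δ`. -/
def Ddelta (δ : Finset X → ℝ) (A B : Finset X) : ℝ :=
  max (δ (A ∪ B) - δ A - δ B) 0

/-- `P_δ` for a diversity `δ`. -/
def Pdelta (δ : Finset X → ℝ) : Set (Finset X → ℝ) :=
  {f | f ∅ = 0 ∧ ∀ Cc : Finset (Finset X), Cc.Nonempty →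
    (∀ C ∈ Cc, C.Nonempty) → δ (Cc.sup id) ≤ ∑ C ∈ Cc, f C}

/-- The tight span `T_δ` of a diversity `δ`. -/
def Tdelta (δ : Finset X → ℝ) : Set (Finset X → ℝ) :=
  {f | f ∈ Pdelta δ ∧ ∀ g ∈ Pdelta δ, g ≤ f → g = f}

/-- The relaxation `P_δ^{(2)}` using only pairs of finite sets. -/
def Pdelta2 (δ : Finset X → ℝ) : Set (Finset X → ℝ) :=
  {f | f ∅ = 0 ∧ ∀ A B : Finset X, δ (A ∪ B) ≤ f A + f B}

/-- The minimal elements `T_δ^{(2)}` of `P_δ^{(2)}`. -/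
def Tdelta2 (δ : Finset X → ℝ) : Set (Finset X → ℝ) :=
  {f | f ∈ Pdelta2 δ ∧ ∀ g ∈ Pdelta2 δ, g ≤ f → g = f}

/-- `B_A = {x ∈ X : δ(A ∪ {x}) ≤ δ(A)}`. -/
def Bset (δ : Finset X → ℝ) (A : Finset X) : Set X :=
  {x | δ (A ∪ {x}) ≤ δ A}

/-- A hyperconvex diversity. -/
def DivHyperconvex (δ : Finset X → ℝ) : Prop :=
  ∀ (ι : Type*) (A : ι → Finset X) (r : ι → ℝ), (∀ γ, 0 ≤ r γ) →
    (∀ G : Finset ι, G.Nonempty → δ (G.sup A) ≤ ∑ γ ∈ G, r γ) →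
    ∃ z : X, ∀ γ, δ (A γ ∪ {z}) ≤ r γ

end DivDefs

/-!
Always `P_δ ⊆ P_δ⁽²⁾`, and `f ↦ f - δ` maps `P_δ⁽²⁾` onto the elements of `P_{D_δ}` vanishing
at `∅`; since minimal elements of `P_{D_δ}` vanish at `∅`, this gives `T_δ⁽²⁾ = δ + T_{D_δ}`,
i.e. (ii) ⇔ (iii). For (ii) ⇒ (i): by Zorn every `f ∈ P_δ⁽²⁾` dominates an element of
`T_δ⁽²⁾ = T_δ ⊆ P_δ`, and `P_δ` is closed upwards.
-/

section TightSpan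

variable {Y : Type*} {d : Y → Y → ℝ}

lemma half_le_of_mem_Pd {f : Y → ℝ} (hf : f ∈ Pd d) (x : Y) : d x x / 2 ≤ f x := by
  linarith [hf x x]

lemma bddBelow_range_apply_of_subset_Pd {c : Set (Y → ℝ)} (hcP : c ⊆ Pd d) (x : Y) :
    BddBelow (Set.range fun g : c ↦ (g : Y → ℝ) x) :=
  ⟨d x x / 2, by rintro _ ⟨g, rfl⟩; exact half_le_of_mem_Pd (hcP g.2) x⟩

lemma iInf_mem_Pd {c : Set (Y → ℝ)} (hcP : c ⊆ Pd d) (hchain : IsChain (· ≤ ·) c)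
    (hne : c.Nonempty) : (fun x ↦ ⨅ g : c, (g : Y → ℝ) x) ∈ Pd d := by
  have : Nonempty c := hne.to_subtype
  intro x y
  -- Comparability in the chain lets the two infima be taken independently.
  have hmixed (g h : c) : d x y ≤ (g : Y → ℝ) x + (h : Y → ℝ) y := by
    rcases hchain.total g.2 h.2 with hgh | hhg
    · linarith [hcP g.2 x y, hgh y]
    · linarith [hcP h.2 x y, hhg x]
  have hy (h : c) : d x y - (h : Y → ℝ) y ≤ ⨅ g : c, (g : Y → ℝ) x :=
    le_ciInf fun g ↦ by linarith [hmixed g h]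
  have hx : d x y - ⨅ g : c, (g : Y → ℝ) x ≤ ⨅ h : c, (h : Y → ℝ) y :=
    le_ciInf fun h ↦ by linarith [hy h]
  linarith

lemma exists_mem_Td_le_s17 {f : Y → ℝ} (hf : f ∈ Pd d) : ∃ g ∈ Td d, g ≤ f := by
  obtain ⟨m, hfm, hmax⟩ := zorn_le_nonempty₀ (α := (Y → ℝ)ᵒᵈ) (OrderDual.ofDual ⁻¹' Pd d)
    (fun c hcP hchain g hg ↦ ⟨OrderDual.toDual fun x ↦ ⨅ h : c, OrderDual.ofDual h.1 x,
      iInf_mem_Pd hcP hchain.symm ⟨g, hg⟩,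
      fun h hh x ↦ ciInf_le (bddBelow_range_apply_of_subset_Pd hcP x) (⟨h, hh⟩ : c)⟩)
    (OrderDual.toDual f) hf
  exact ⟨OrderDual.ofDual m, ⟨hmax.1, fun g hg hgm ↦ le_antisymm hgm (hmax.2 hg hgm)⟩, hfm⟩

end TightSpan

section Diversity

variable {X : Type*} [DecidableEq X] {δ : Finset X → ℝ}

lemma IsDiversity.map_empty (hδ : IsDiversity δ) : δ ∅ = 0 :=
  (hδ.2.1 ∅).2 (by simp)

lemma Ddelta_comm (A B : Finset X) : Ddelta δ A B = Ddelta δ B A := by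
  simp only [Ddelta, Finset.union_comm A B, sub_sub, add_comm (δ A)]

lemma Ddelta_empty_left (h : 0 ≤ δ ∅) (B : Finset X) : Ddelta δ ∅ B = 0 := by
  simp only [Ddelta, Finset.empty_union]
  exact max_eq_right (by linarith)

lemma Ddelta_nonneg (A B : Finset X) : 0 ≤ Ddelta δ A B := le_max_right _ _

lemma sub_le_Ddelta (A B : Finset X) : δ (A ∪ B) - δ A - δ B ≤ Ddelta δ A B :=
  le_max_left _ _

lemma le_of_mem_Pdelta2 {f : Finset X → ℝ} (hf : f ∈ Pdelta2 δ) (A : Finset X) :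
    δ A ≤ f A := by
  simpa [hf.1] using hf.2 A ∅

lemma mem_Pdelta2_iff {f : Finset X → ℝ} :
    f ∈ Pdelta2 δ ↔ f - δ ∈ Pd (Ddelta δ) ∧ f ∅ = 0 := by
  refine ⟨fun hf ↦ ⟨fun A B ↦ max_le ?_ ?_, hf.1⟩, fun ⟨hf, h0⟩ ↦ ⟨h0, fun A B ↦ ?_⟩⟩
  · simp only [Pi.sub_apply]; linarith [hf.2 A B]
  · simp only [Pi.sub_apply]; linarith [le_of_mem_Pdelta2 hf A, le_of_mem_Pdelta2 hf B]
  · have := hf A B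
    simp only [Pi.sub_apply] at this
    linarith [sub_le_Ddelta (δ := δ) A B]

lemma nonneg_of_mem_Pd_Ddelta {g : Finset X → ℝ} (hg : g ∈ Pd (Ddelta δ)) (A : Finset X) :
    0 ≤ g A := by
  linarith [half_le_of_mem_Pd hg A, Ddelta_nonneg (δ := δ) A A]

lemma update_empty_le_of_mem_Pd_Ddelta {g : Finset X → ℝ} (hg : g ∈ Pd (Ddelta δ)) :
    Function.update g ∅ 0 ≤ g :=
  update_le_iff.2 ⟨nonneg_of_mem_Pd_Ddelta hg ∅, fun _ _ ↦ le_rfl⟩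

lemma update_empty_mem_Pd_Ddelta (h : 0 ≤ δ ∅) {g : Finset X → ℝ}
    (hg : g ∈ Pd (Ddelta δ)) : Function.update g ∅ 0 ∈ Pd (Ddelta δ) := by
  intro A B
  simp only [Function.update_apply]
  split_ifs with hA hB hB
  · subst hA; simp [Ddelta_empty_left h]
  · subst hA; simp [Ddelta_empty_left h, nonneg_of_mem_Pd_Ddelta hg B]
  · subst hB; simp [Ddelta_comm A, Ddelta_empty_left h, nonneg_of_mem_Pd_Ddelta hg A]
  · exact hg A B

lemma apply_empty_eq_zero_of_mem_Td_Ddelta (h : 0 ≤ δ ∅) {g : Finset X → ℝ}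
    (hg : g ∈ Td (Ddelta δ)) : g ∅ = 0 := by
  rw [← hg.2 _ (update_empty_mem_Pd_Ddelta h hg.1) (update_empty_le_of_mem_Pd_Ddelta hg.1),
    Function.update_self]

lemma mem_Tdelta2_iff (h : δ ∅ = 0) {f : Finset X → ℝ} :
    f ∈ Tdelta2 δ ↔ f - δ ∈ Td (Ddelta δ) := by
  constructor
  · rintro ⟨hfP, hfmin⟩
    refine ⟨(mem_Pdelta2_iff.1 hfP).1, fun g hg hgf ↦ ?_⟩
    set g' := Function.update g ∅ 0
    have hg'P : g' + δ ∈ Pdelta2 δ :=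
      mem_Pdelta2_iff.2 ⟨by simpa using update_empty_mem_Pd_Ddelta h.ge hg, by simp [g', h]⟩
    have hg'g : g' ≤ g := update_empty_le_of_mem_Pd_Ddelta hg
    have heq : g' + δ = f := hfmin _ hg'P fun A ↦ by
      have := hgf A; simp only [Pi.add_apply, Pi.sub_apply] at *; linarith [hg'g A]
    refine le_antisymm hgf fun A ↦ ?_
    have := congrFun heq A
    simp only [Pi.add_apply, Pi.sub_apply] at *
    linarith [hg'g A]
  · intro hfT
    have hf0 : f ∅ = 0 := by
      have := apply_empty_eq_zero_of_mem_Td_Ddelta h.ge hfT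
      simp only [Pi.sub_apply, h] at this
      linarith
    refine ⟨mem_Pdelta2_iff.2 ⟨hfT.1, hf0⟩, fun g hg hgf ↦ ?_⟩
    have := hfT.2 _ (mem_Pdelta2_iff.1 hg).1 fun A ↦ sub_le_sub_right (hgf A) _
    simpa using this

lemma exists_mem_Tdelta2_le (h : δ ∅ = 0) {f : Finset X → ℝ} (hf : f ∈ Pdelta2 δ) :
    ∃ g ∈ Tdelta2 δ, g ≤ f := by
  obtain ⟨g, hgT, hgf⟩ := exists_mem_Td_le_s17 (mem_Pdelta2_iff.1 hf).1
  refine ⟨g + δ, (mem_Tdelta2_iff h).2 (by simpa using hgT), fun A ↦ ?_⟩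
  have := hgf A
  simp only [Pi.add_apply, Pi.sub_apply] at *
  linarith

lemma le_sum_of_mem_Pdelta (h : δ ∅ = 0) {f : Finset X → ℝ} (hf : f ∈ Pdelta δ)
    (Cc : Finset (Finset X)) : δ (Cc.sup id) ≤ ∑ C ∈ Cc, f C := by
  rw [← Finset.sup_erase_bot, Finset.bot_eq_empty, ← Finset.sum_erase Cc hf.1]
  rcases (Cc.erase ∅).eq_empty_or_nonempty with hCc | hCc
  · simp [hCc, h]
  · exact hf.2 _ hCc fun C hC ↦ Finset.nonempty_iff_ne_empty.2 (Finset.ne_of_mem_erase hC)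

lemma Pdelta_subset_Pdelta2 (hδ : IsDiversity δ) : Pdelta δ ⊆ Pdelta2 δ := by
  intro f hf
  have hsingle (A : Finset X) : δ A ≤ f A := by
    simpa using le_sum_of_mem_Pdelta hδ.map_empty hf {A}
  refine ⟨hf.1, fun A B ↦ ?_⟩
  rcases eq_or_ne A B with rfl | hAB
  · rw [Finset.union_self]
    linarith [hsingle A, hδ.1 A]
  · simpa [Finset.sum_pair hAB] using le_sum_of_mem_Pdelta hδ.map_empty hf {A, B}

lemma mem_Pdelta_of_le {f g : Finset X → ℝ} (hg : g ∈ Pdelta δ) (hgf : g ≤ f) (hf0 : f ∅ = 0) :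
    f ∈ Pdelta δ :=
  ⟨hf0, fun Cc hCc hC ↦ (hg.2 Cc hCc hC).trans (Finset.sum_le_sum fun C _ ↦ hgf C)⟩

end Diversity

/-- Equivalence of: `P_δ = P_δ⁽²⁾`, `T_δ = T_δ⁽²⁾`, and
`f ∈ T_δ ↔ f - δ ∈ T_{D_δ}` for all `f`. -/
theorem statement17 {X : Type*} [DecidableEq X] (δ : Finset X → ℝ)
    (hδ : IsDiversity δ) :
    List.TFAE
      [Pdelta δ = Pdelta2 δ,
       Tdelta δ = Tdelta2 δ,
       ∀ f : Finset X → ℝ, f ∈ Tdelta δ ↔ f - δ ∈ Td (Ddelta δ)] := by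
  tfae_have 1 → 2 := fun h ↦ by simp only [Tdelta, Tdelta2, h]
  tfae_have 2 → 1 := by
    intro h
    refine (Pdelta_subset_Pdelta2 hδ).antisymm fun f hf ↦ ?_
    obtain ⟨g, hgT, hgf⟩ := exists_mem_Tdelta2_le hδ.map_empty hf
    exact mem_Pdelta_of_le (h ▸ hgT).1 hgf hf.1
  tfae_have 2 ↔ 3 := by
    simp only [Set.ext_iff, mem_Tdelta2_iff hδ.map_empty]
  tfae_finish
end
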